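/- Let P ∈ ℝ² and let u, v ∈ ℝ² satisfy ‖u‖ = ‖v‖ = 2√3 and ⟨u,v⟩ = 6. Set Λ = {a·u + b·v : a, b ∈ ℤ} and w = (u+v)/3. Then both of the following sets are balanced configurations: (i) the vertices and edge midpoints of the regular hexagon tiling with side 2, namely C₁ = (P + Λ) ∪ (P + w + Λ) ∪ (P + w/2 + Λ) ∪ (P + (w−u)/2 + Λ) ∪ (P + (w−v)/2 + Λ); and (ii) the vertices, edge midpoints, and face centers of the same tiling, namely C₂ = C₁ ∪ (P + 2w + Λ). That is, for every point x in the set and every d > 0, the set of points of the configuration at distance d from x is finite and the vectors from x to these points sum to zero. -/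

import Mathlib

open EuclideanGeometry RealInnerProductSpace

noncomputable section

/-- The Euclidean plane. -/
abbrev E2 := EuclideanSpace ℝ (Fin 2)

/-- A configuration `C ⊆ ℝ²` is balanced if for every `P ∈ C` and every `d > 0` the set of
points of `C` at distance `d` from `P` is finite and the vectors from `P` to these points
sum to zero. -/
def IsBalanced (C : Set E2) : Prop :=
  ∀ P ∈ C, ∀ d : ℝ, 0 < d →
    {x ∈ C | dist x P = d}.Finite ∧ ∑ᶠ x ∈ {x ∈ C | dist x P = d}, (x - P) = 0

/-- `C` has minimal distance 1: distinct points are at distance at least 1, and some pair of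
points is at distance exactly 1. -/
def MinDistOne (C : Set E2) : Prop :=
  (∀ x ∈ C, ∀ y ∈ C, x ≠ y → 1 ≤ dist x y) ∧ ∃ x ∈ C, ∃ y ∈ C, dist x y = 1

/-- The set of neighbors (points of `C` at distance exactly 1) of `P`. -/
def nbrs (C : Set E2) (P : E2) : Set E2 := {x ∈ C | dist x P = 1}

/-- The coset `P + ℤu + ℤv` of the lattice generated by `u` and `v`. -/
def latticePts (P u v : E2) : Set E2 :=
  {x | ∃ a b : ℤ, x = P + (a : ℝ) • u + (b : ℝ) • v}

/-- The vertices and edge midpoints of the regular hexagon tiling with side 2 determined by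
`u, v` with `‖u‖ = ‖v‖ = 2√3` and `⟪u,v⟫ = 6`: with `Λ = ℤu + ℤv` and `w = (u+v)/3`, this is
`(P + Λ) ∪ (P + w + Λ) ∪ (P + w/2 + Λ) ∪ (P + (w-u)/2 + Λ) ∪ (P + (w-v)/2 + Λ)`. -/
def hexVertsAndMids (P u v : E2) : Set E2 :=
  latticePts P u v ∪ latticePts (P + (3⁻¹ : ℝ) • (u + v)) u v ∪
    latticePts (P + (6⁻¹ : ℝ) • (u + v)) u v ∪
    latticePts (P + (6⁻¹ : ℝ) • (u + v) - (2⁻¹ : ℝ) • u) u v ∪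
    latticePts (P + (6⁻¹ : ℝ) • (u + v) - (2⁻¹ : ℝ) • v) u v

/-- The vertices, edge midpoints and face centers of the same hexagon tiling:
`hexVertsAndMids P u v` together with the coset `P + 2w + Λ` where `w = (u+v)/3`. -/
def hexVertsMidsCenters (P u v : E2) : Set E2 :=
  hexVertsAndMids P u v ∪ latticePts (P + (2 / 3 : ℝ) • (u + v)) u v


/-!
Both configurations are unions of cosets of `Λ = ℤu + ℤv` inside the finer lattice
`P + ℤ(u/6) + ℤ(v/6)`, so every sphere meets them in finitely many points. Around each of its
points `q`, each configuration is invariant under the rotation by `120°` about `q` or under the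
point reflection in `q`; in coordinates this is a finite check on residues modulo `6`. Such a
symmetry `R` permutes the points at distance `d` from `q`, so the sum `s` of the vectors `x - q`
satisfies `R s = s`, and as `R` fixes no nonzero vector, `s = 0`.
-/

theorem finsum_mem_sub_eq_zero_of_mapsTo {E : Type*} [NormedAddCommGroup E] [NormedSpace ℝ E]
    {S : Set E} (hS : S.Finite) {q : E} (R : E →ₗᵢ[ℝ] E) (hR : ∀ z, R z = z → z = 0)
    (hmaps : Set.MapsTo (fun x ↦ q + R (x - q)) S S) :
    ∑ᶠ x ∈ S, (x - q) = 0 := by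
  have hbij : Set.BijOn (fun x ↦ q + R (x - q)) S S :=
    (hS.injOn_iff_bijOn_of_mapsTo hmaps).1 fun x _ y _ hxy ↦ by simpa using hxy
  apply hR
  refine (R.toLinearMap.toAddMonoidHom.map_finsum_mem _ hS).trans ?_
  exact finsum_mem_eq_of_bijOn _ hbij fun x _ ↦ by simp

theorem isBalanced_of_forall_exists_linearIsometry {C : Set E2}
    (hfin : ∀ q d, {x ∈ C | dist x q = d}.Finite)
    (hsymm : ∀ q ∈ C, ∃ R : E2 →ₗᵢ[ℝ] E2,
      (∀ z, R z = z → z = 0) ∧ Set.MapsTo (fun x ↦ q + R (x - q)) C C) :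
    IsBalanced C := by
  intro q hq d _
  obtain ⟨R, hR, hmaps⟩ := hsymm q hq
  refine ⟨hfin q d, finsum_mem_sub_eq_zero_of_mapsTo (hfin q d) R hR fun x hx ↦ ⟨hmaps hx.1, ?_⟩⟩
  rw [dist_eq_norm, add_sub_cancel_left, R.norm_map, ← dist_eq_norm, hx.2]

section HexagonalBasis

variable {E : Type*} [NormedAddCommGroup E] [InnerProductSpace ℝ E] {u v : E}

theorem norm_smul_add_smul_sq (hv : ‖v‖ = ‖u‖) (huv : 2 * ⟪u, v⟫ = ‖u‖ ^ 2) (a b : ℝ) :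
    ‖a • u + b • v‖ ^ 2 = (a ^ 2 + a * b + b ^ 2) * ‖u‖ ^ 2 := by
  rw [← real_inner_self_eq_norm_sq]
  simp only [inner_add_left, inner_add_right, real_inner_smul_left, real_inner_smul_right,
    real_inner_comm u v]
  rw [real_inner_self_eq_norm_sq, real_inner_self_eq_norm_sq, hv]
  linear_combination (a * b) * huv

theorem eq_zero_of_smul_add_smul_eq_zero (hu : u ≠ 0) (hv : ‖v‖ = ‖u‖)
    (huv : 2 * ⟪u, v⟫ = ‖u‖ ^ 2) {a b : ℝ} (hab : a • u + b • v = 0) : a = 0 ∧ b = 0 := by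
  have h := norm_smul_add_smul_sq hv huv a b
  rw [hab, norm_zero, zero_pow two_ne_zero, eq_comm, mul_eq_zero] at h
  have hq : a ^ 2 + a * b + b ^ 2 = 0 := h.resolve_right (by simpa using hu)
  constructor <;> nlinarith [sq_nonneg (a + b), sq_nonneg a, sq_nonneg b]

theorem exists_linearIsometry_rotate (hE : Module.finrank ℝ E = 2) (hu : u ≠ 0)
    (hv : ‖v‖ = ‖u‖) (huv : 2 * ⟪u, v⟫ = ‖u‖ ^ 2) :
    ∃ R : E →ₗᵢ[ℝ] E, R u = v - u ∧ R v = -u ∧ ∀ z, R z = z → z = 0 := by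
  have hli : LinearIndependent ℝ ![u, v] :=
    LinearIndependent.pair_iff.2 fun a b ↦ eq_zero_of_smul_add_smul_eq_zero hu hv huv
  have : FiniteDimensional ℝ E := Module.finite_of_finrank_eq_succ hE
  let B := basisOfLinearIndependentOfCardEqFinrank hli (by simp [hE])
  have hB : ⇑B = ![u, v] := coe_basisOfLinearIndependentOfCardEqFinrank hli _
  have hspan (z : E) : ∃ a b : ℝ, a • u + b • v = z := by
    have := B.sum_repr z
    simp only [Fin.sum_univ_two, hB] at this
    exact ⟨_, _, this⟩
  let R₀ : E →ₗ[ℝ] E := B.constr ℝ ![v - u, -u]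
  have hRu : R₀ u = v - u := by convert B.constr_basis ℝ ![v - u, -u] 0 using 2 <;> simp [hB]
  have hRv : R₀ v = -u := by convert B.constr_basis ℝ ![v - u, -u] 1 using 2 <;> simp [hB]
  have hR (a b : ℝ) : R₀ (a • u + b • v) = (-a - b) • u + a • v := by
    rw [map_add, map_smul, map_smul, hRu, hRv]; module
  refine ⟨⟨R₀, fun z ↦ ?_⟩, hRu, hRv, fun z hz ↦ ?_⟩ <;> obtain ⟨a, b, rfl⟩ := hspan z
  · rw [hR, ← sq_eq_sq₀ (norm_nonneg _) (norm_nonneg _), norm_smul_add_smul_sq hv huv,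
      norm_smul_add_smul_sq hv huv]
    ring
  · have hab : (-2 * a - b) • u + (a - b) • v = 0 := by
      rw [← sub_eq_zero.2 hz]; simp only [LinearIsometry.coe_mk, hR]; module
    obtain ⟨h₁, h₂⟩ := eq_zero_of_smul_add_smul_eq_zero hu hv huv hab
    obtain rfl : a = 0 := by linarith
    obtain rfl : b = 0 := by linarith
    simp

end HexagonalBasis

section Coordinates

variable {A B : Type*} [AddCommGroup A] [AddCommGroup B]

/-- The rotation by `120°` about `q`, in coordinates with respect to a basis `u, v` of a
hexagonal lattice (it sends `u` to `v - u` and `v` to `-u`). -/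
def rotCoord (q p : A × A) : A × A :=
  (q.1 - (p.1 - q.1) - (p.2 - q.2), q.2 + (p.1 - q.1))

theorem prodMap_rotCoord (f : A →+ B) (q p : A × A) :
    f.prodMap f (rotCoord q p) = rotCoord (f.prodMap f q) (f.prodMap f p) := by
  simp [rotCoord]

def IsSymmetricAboutEachPoint (S : Set (A × A)) : Prop :=
  ∀ q ∈ S, (∀ p ∈ S, rotCoord q p ∈ S) ∨ ∀ p ∈ S, q - (p - q) ∈ S

theorem IsSymmetricAboutEachPoint.preimage {S : Set (B × B)} (hS : IsSymmetricAboutEachPoint S)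
    (f : A →+ B) : IsSymmetricAboutEachPoint (f.prodMap f ⁻¹' S) := by
  intro q hq
  refine (hS _ hq).imp (fun h p hp ↦ ?_) fun h p hp ↦ ?_
  · simpa only [Set.mem_preimage, prodMap_rotCoord] using h _ hp
  · simpa only [Set.mem_preimage, map_sub] using h _ hp

end Coordinates

section SixthLattice

variable {E : Type*} [NormedAddCommGroup E] [InnerProductSpace ℝ E] {u v : E}

def sixthLatticePt (P u v : E) (p : ℤ × ℤ) : E := P + ((p.1 : ℝ) / 6) • u + ((p.2 : ℝ) / 6) • v

theorem sixthLatticePt_sub_base (P : E) (p : ℤ × ℤ) :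
    sixthLatticePt P u v p - P = ((p.1 : ℝ) / 6) • u + ((p.2 : ℝ) / 6) • v := by
  rw [sixthLatticePt, add_assoc, add_sub_cancel_left]

theorem sixthLatticePt_sub (P : E) (p q : ℤ × ℤ) :
    sixthLatticePt P u v p - sixthLatticePt P u v q =
      (((p.1 - q.1 : ℤ) : ℝ) / 6) • u + (((p.2 - q.2 : ℤ) : ℝ) / 6) • v := by
  simp only [sixthLatticePt]; push_cast; module

theorem sixthLatticePt_add_rotate (P : E) {R : E →ₗ[ℝ] E} (hRu : R u = v - u) (hRv : R v = -u)
    (q p : ℤ × ℤ) :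
    sixthLatticePt P u v q + R (sixthLatticePt P u v p - sixthLatticePt P u v q) =
      sixthLatticePt P u v (rotCoord q p) := by
  rw [sixthLatticePt_sub, map_add, map_smul, map_smul, hRu, hRv]
  simp only [sixthLatticePt, rotCoord]; push_cast; module

theorem sixthLatticePt_add_neg_sub (P : E) (q p : ℤ × ℤ) :
    sixthLatticePt P u v q + -(sixthLatticePt P u v p - sixthLatticePt P u v q) =
      sixthLatticePt P u v (q - (p - q)) := by
  simp only [sixthLatticePt, Prod.fst_sub, Prod.snd_sub]; push_cast; module

theorem finite_preimage_sixthLatticePt_closedBall (hu : u ≠ 0) (hv : ‖v‖ = ‖u‖)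
    (huv : 2 * ⟪u, v⟫ = ‖u‖ ^ 2) (P q : E) (r : ℝ) :
    (sixthLatticePt P u v ⁻¹' Metric.closedBall q r).Finite := by
  set K := 36 * (r + dist q P) ^ 2 / ‖u‖ ^ 2
  set N := ⌈2 * K⌉
  refine (Set.finite_Icc (-N, -N) (N, N)).subset fun p hp ↦ ?_
  have hdist : ‖sixthLatticePt P u v p - P‖ ≤ r + dist q P := by
    rw [← dist_eq_norm]
    exact (dist_triangle _ q _).trans (add_le_add_left hp _)
  have hK : (p.1 : ℝ) ^ 2 + p.1 * p.2 + p.2 ^ 2 ≤ K := by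
    have hsq := pow_le_pow_left₀ (norm_nonneg _) hdist 2
    rw [sixthLatticePt_sub_base, norm_smul_add_smul_sq hv huv] at hsq
    rw [le_div_iff₀ (by positivity)]
    linarith
  have hN : 2 * K ≤ N := Int.le_ceil _
  have h₁ : p.1 ^ 2 ≤ N := by
    exact_mod_cast (show (p.1 : ℝ) ^ 2 ≤ N by nlinarith [sq_nonneg (p.1 + 2 * p.2 : ℝ)])
  have h₂ : p.2 ^ 2 ≤ N := by
    exact_mod_cast (show (p.2 : ℝ) ^ 2 ≤ N by nlinarith [sq_nonneg (2 * p.1 + p.2 : ℝ)])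
  constructor <;> constructor <;> nlinarith

end SixthLattice

abbrev mod6 : ℤ × ℤ →+ ZMod 6 × ZMod 6 := (Int.castAddHom _).prodMap (Int.castAddHom _)

theorem latticePts_eq_image_sixthLatticePt (P : E2) {Q u v : E2} (r : ℤ × ℤ)
    (hQ : Q = sixthLatticePt P u v r) :
    latticePts Q u v = sixthLatticePt P u v '' (mod6 ⁻¹' {mod6 r}) := by
  subst hQ
  obtain ⟨r₁, r₂⟩ := r
  ext x
  constructor
  · rintro ⟨a, b, rfl⟩
    refine ⟨(r₁ + 6 * a, r₂ + 6 * b), ?_, ?_⟩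
    · simp [show (6 : ZMod 6) = 0 from rfl]
    · simp only [sixthLatticePt]; push_cast; module
  · rintro ⟨⟨p₁, p₂⟩, hp, rfl⟩
    simp only [Set.mem_preimage, Set.mem_singleton_iff, AddMonoidHom.coe_prodMap, Prod.map_apply,
      Int.coe_castAddHom, Prod.mk.injEq, ZMod.intCast_eq_intCast_iff_dvd_sub] at hp
    obtain ⟨⟨a, ha⟩, ⟨b, hb⟩⟩ := hp
    obtain rfl : p₁ = r₁ - 6 * a := by omega
    obtain rfl : p₂ = r₂ - 6 * b := by omega
    refine ⟨-a, -b, ?_⟩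
    simp only [sixthLatticePt]; push_cast; module

def hexVertsAndMidsMod6 : Finset (ZMod 6 × ZMod 6) := {(0, 0), (2, 2), (1, 1), (4, 1), (1, 4)}

def hexVertsMidsCentersMod6 : Finset (ZMod 6 × ZMod 6) := insert (4, 4) hexVertsAndMidsMod6

theorem isSymmetricAboutEachPoint_hexVertsAndMidsMod6 :
    IsSymmetricAboutEachPoint (hexVertsAndMidsMod6 : Set (ZMod 6 × ZMod 6)) := by
  simp only [IsSymmetricAboutEachPoint, Finset.mem_coe]; decide

theorem isSymmetricAboutEachPoint_hexVertsMidsCentersMod6 :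
    IsSymmetricAboutEachPoint (hexVertsMidsCentersMod6 : Set (ZMod 6 × ZMod 6)) := by
  simp only [IsSymmetricAboutEachPoint, Finset.mem_coe]; decide

theorem hexVertsAndMids_eq_image (P u v : E2) :
    hexVertsAndMids P u v = sixthLatticePt P u v '' (mod6 ⁻¹' hexVertsAndMidsMod6) := by
  rw [hexVertsAndMids, latticePts_eq_image_sixthLatticePt P (0, 0),
    latticePts_eq_image_sixthLatticePt P (2, 2), latticePts_eq_image_sixthLatticePt P (1, 1),
    latticePts_eq_image_sixthLatticePt P (-2, 1), latticePts_eq_image_sixthLatticePt P (1, -2)]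
  · simp only [← Set.image_union, ← Set.preimage_union]
    congr 2
    ext s
    simp only [Set.mem_union, Set.mem_singleton_iff, hexVertsAndMidsMod6, Finset.coe_insert,
      Finset.coe_singleton, Set.mem_insert_iff]
    revert s
    decide
  all_goals simp only [sixthLatticePt]; push_cast; module

theorem hexVertsMidsCenters_eq_image (P u v : E2) :
    hexVertsMidsCenters P u v = sixthLatticePt P u v '' (mod6 ⁻¹' hexVertsMidsCentersMod6) := by
  rw [hexVertsMidsCenters, hexVertsAndMids_eq_image, latticePts_eq_image_sixthLatticePt P (4, 4),
    ← Set.image_union, ← Set.preimage_union, hexVertsMidsCentersMod6, Finset.coe_insert,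
    Set.insert_eq, Set.union_comm]
  · rfl
  · simp only [sixthLatticePt]; push_cast; module

theorem isBalanced_image_sixthLatticePt (P : E2) {u v : E2} (hu : u ≠ 0) (hv : ‖v‖ = ‖u‖)
    (huv : 2 * ⟪u, v⟫ = ‖u‖ ^ 2) {S : Set (ℤ × ℤ)} (hS : IsSymmetricAboutEachPoint S) :
    IsBalanced (sixthLatticePt P u v '' S) := by
  obtain ⟨R, hRu, hRv, hR⟩ := exists_linearIsometry_rotate finrank_euclideanSpace_fin hu hv huv
  refine isBalanced_of_forall_exists_linearIsometry (fun q d ↦ ?_) ?_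
  · refine ((finite_preimage_sixthLatticePt_closedBall hu hv huv P q d).image
      (sixthLatticePt P u v)).subset ?_
    rintro _ ⟨⟨p, -, rfl⟩, hd⟩
    exact ⟨p, hd.le, rfl⟩
  · rintro _ ⟨q, hq, rfl⟩
    rcases hS q hq with hrot | hrefl
    · refine ⟨R, hR, ?_⟩
      rintro _ ⟨p, hp, rfl⟩
      exact ⟨_, hrot p hp, (sixthLatticePt_add_rotate P hRu hRv q p).symm⟩
    · refine ⟨(LinearIsometryEquiv.neg ℝ).toLinearIsometry, fun z hz ↦ ?_, ?_⟩
      · change -z = z at hz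
        linear_combination (norm := module) (-2⁻¹ : ℝ) • hz
      · rintro _ ⟨p, hp, rfl⟩
        exact ⟨_, hrefl p hp, (sixthLatticePt_add_neg_sub P q p).symm⟩

/-- Both the vertices-and-edge-midpoints configuration and the
vertices-edge-midpoints-and-face-centers configuration of a regular hexagon tiling with
side 2 are balanced configurations. -/
theorem hexagon_with_midpoints_balanced (P u v : E2)
    (hu : ‖u‖ = 2 * Real.sqrt 3) (hv : ‖v‖ = 2 * Real.sqrt 3) (huv : ⟪u, v⟫ = 6) :
    IsBalanced (hexVertsAndMids P u v) ∧ IsBalanced (hexVertsMidsCenters P u v) := by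
  have hu₀ : u ≠ 0 := by
    rintro rfl
    simp at hu
  have hvu : ‖v‖ = ‖u‖ := hv.trans hu.symm
  have huv' : 2 * ⟪u, v⟫ = ‖u‖ ^ 2 := by
    rw [huv, hu, mul_pow, Real.sq_sqrt zero_le_three]; norm_num
  rw [hexVertsAndMids_eq_image, hexVertsMidsCenters_eq_image]
  exact ⟨isBalanced_image_sixthLatticePt P hu₀ hvu huv'
      (isSymmetricAboutEachPoint_hexVertsAndMidsMod6.preimage _),
    isBalanced_image_sixthLatticePt P hu₀ hvu huv'
      (isSymmetricAboutEachPoint_hexVertsMidsCentersMod6.preimage _)⟩
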